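/- arXiv:1604.04928 — 10 statements merged into one kernel-verified Lean document; each statement's English description precedes it below -/
import Mathlib

section
/- Suppose P_L > 1/2 and B ≥ B_PA. Then for every c ∈ (0, c_max], 2·(P_H − P_L)·F(c) + 2·P_L − 1 ≥ c/(B·(P_H − P_L)), and the inequality is strict for every c ∈ (0, c_max). (Hence under the peer output agreement mechanism every worker prefers to exert effort regardless of realized cost, i.e. the equilibrium threshold is c* = c_max.) -/
open Set

/-- When `P_L > 1/2` and the bonus `B` is at least `B_PA = c_max/((2 P_H - 1)(P_H - P_L))`,
the LHS of the PA equilibrium equation dominates the RHS on `(0, c_max]`, strictly on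
`(0, c_max)`; hence the equilibrium threshold is `c* = c_max`. -/
theorem pa_full_effort_when_large_bonus
    (c_max P_L P_H B : ℝ) (F : ℝ → ℝ)
    (hcmax : 0 < c_max)
    (hFcont : ContinuousOn F (Icc 0 c_max))
    (hFmono : MonotoneOn F (Icc 0 c_max))
    (hF0 : F 0 = 0) (hFmax : F c_max = 1)
    (hFconc : StrictConcaveOn ℝ (Icc 0 c_max) F)
    (hPL : 1 / 2 < P_L) (hPLH : P_L < P_H) (hPH : P_H ≤ 1)
    (hBpos : 0 < B)
    (hB : c_max / ((2 * P_H - 1) * (P_H - P_L)) ≤ B) :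
    (∀ c ∈ Ioc 0 c_max,
        2 * (P_H - P_L) * F c + 2 * P_L - 1 ≥ c / (B * (P_H - P_L))) ∧
    (∀ c ∈ Ioo 0 c_max,
        2 * (P_H - P_L) * F c + 2 * P_L - 1 > c / (B * (P_H - P_L))) := by
  have hd : 0 < P_H - P_L := by linarith
  have h2PH : 0 < 2 * P_H - 1 := by linarith
  have hBd : c_max ≤ B * ((2 * P_H - 1) * (P_H - P_L)) := by
    rw [div_le_iff₀ (by positivity)] at hB
    linarith [hB]
  have hBdpos : 0 < B * (P_H - P_L) := by positivity
  -- concavity gives F c ≥ c / c_max on [0, c_max], i.e. c ≤ F c * c_max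
  have key : ∀ c ∈ Icc (0:ℝ) c_max, c ≤ F c * c_max := by
    intro c hc
    have ha : (0:ℝ) ≤ 1 - c / c_max := by
      have : c / c_max ≤ 1 := (div_le_one hcmax).2 hc.2
      linarith
    have hb : (0:ℝ) ≤ c / c_max := div_nonneg hc.1 hcmax.le
    have hcomb := hFconc.concaveOn.2 (x := 0) (y := c_max)
      ⟨le_refl 0, hcmax.le⟩ ⟨hcmax.le, le_refl c_max⟩ ha hb (by ring)
    have hxy : (1 - c / c_max) • (0:ℝ) + (c / c_max) • c_max = c := by
      simp [smul_eq_mul]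
      field_simp
    rw [hxy] at hcomb
    rw [hF0, hFmax] at hcomb
    simp [smul_eq_mul] at hcomb
    rw [div_le_iff₀ hcmax] at hcomb
    linarith [hcomb]
  constructor
  · intro c hc
    rw [ge_iff_le, div_le_iff₀ hBdpos]
    have h1 := key c ⟨hc.1.le, hc.2⟩
    nlinarith [mul_le_mul_of_nonneg_left h1
        (show (0:ℝ) ≤ 2 * (P_H - P_L) * (B * (P_H - P_L)) by positivity),
      mul_le_mul_of_nonneg_left hBd hc.1.le,
      mul_nonneg (mul_nonneg (sub_nonneg.2 hc.2) (by linarith : (0:ℝ) ≤ 2 * P_L - 1))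
        hBdpos.le, hcmax]
  · intro c hc
    rw [gt_iff_lt, div_lt_iff₀ hBdpos]
    have h1 := key c ⟨hc.1.le, hc.2.le⟩
    nlinarith [mul_le_mul_of_nonneg_left h1
        (show (0:ℝ) ≤ 2 * (P_H - P_L) * (B * (P_H - P_L)) by positivity),
      mul_le_mul_of_nonneg_left hBd hc.1.le,
      mul_pos (mul_pos (sub_pos.2 hc.2) (by linarith : (0:ℝ) < 2 * P_L - 1))
        hBdpos, hcmax]
end

section
/- Suppose P_L > 1/2 and B ≤ B_PA. Then there exists exactly one c* ∈ (0, c_max] satisfying the PA equilibrium equation 2·(P_H − P_L)·F(c*) + 2·P_L − 1 = c*/(B·(P_H − P_L)). -/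
open Set

/-!
With `D = B (P_H - P_L)` the equation reads `G c = c / D`, where
`G = 2 (P_H - P_L) F + 2 P_L - 1` is strictly concave and `G 0 = 2 P_L - 1 > 0`. The bonus bound
says `G c_max ≤ c_max / D`, so the intermediate value theorem gives a root in `(0, c_max]`. Since
`G 0 ≥ 0`, strict concavity makes `G c / c` strictly decreasing on `(0, c_max]`, and every root
satisfies `G c / c = 1 / D`, so the root is unique.
-/

theorem StrictConcaveOn.const_mul_add {E : Type*} [AddCommMonoid E] [Module ℝ E] {s : Set E}
    {f : E → ℝ} (hf : StrictConcaveOn ℝ s f) {k : ℝ} (hk : 0 < k) (b : ℝ) :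
    StrictConcaveOn ℝ s fun x => k * f x + b := by
  refine ⟨hf.1, fun x hx y hy hxy a c ha hc hac => ?_⟩
  have h := mul_lt_mul_of_pos_left (hf.2 hx hy hxy ha hc hac) hk
  simp only [smul_eq_mul] at h ⊢
  calc a * (k * f x + b) + c * (k * f y + b) = k * (a * f x + c * f y) + b := by
        linear_combination b * hac
    _ < k * f (a • x + c • y) + b := by linarith

theorem StrictConcaveOn.strictAntiOn_div_self {G : ℝ → ℝ} {m : ℝ}
    (hG : StrictConcaveOn ℝ (Icc 0 m) G) (hG0 : 0 ≤ G 0) :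
    StrictAntiOn (fun x => G x / x) (Ioc 0 m) := by
  intro x hx y hy hxy
  have h0 : (0 : ℝ) ∈ Icc 0 m := ⟨le_rfl, hx.1.le.trans hx.2⟩
  have hsecant : (G y - G 0) / (y - 0) < (G x - G 0) / (x - 0) :=
    hG.secant_strict_mono h0 (Ioc_subset_Icc_self hx) (Ioc_subset_Icc_self hy) hx.1.ne'
      (hx.1.trans hxy).ne' hxy
  have hconst : G 0 / y ≤ G 0 / x := div_le_div_of_nonneg_left hG0 hx.1 hxy.le
  simp only [sub_zero, sub_div] at hsecant
  show G y / y < G x / x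
  linarith

theorem exists_mem_Ioc_eq_div_of_continuousOn {G : ℝ → ℝ} {m D : ℝ} (hm : 0 ≤ m)
    (hGc : ContinuousOn G (Icc 0 m)) (hG0 : 0 < G 0) (hGm : G m ≤ m / D) :
    ∃ c ∈ Ioc 0 m, G c = c / D := by
  have hφc : ContinuousOn (fun x => G x - x / D) (Icc 0 m) :=
    hGc.sub (continuousOn_id.div_const D)
  have hzero : (0 : ℝ) ∈ Ico (G m - m / D) (G 0 - 0 / D) :=
    ⟨by linarith, by rw [zero_div, sub_zero]; exact hG0⟩
  obtain ⟨c, hc, hφ⟩ := intermediate_value_Ioc' hm hφc hzero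
  exact ⟨c, hc, sub_eq_zero.mp hφ⟩

theorem existsUnique_mem_Ioc_eq_div_of_strictConcaveOn {G : ℝ → ℝ} {m D : ℝ} (hm : 0 ≤ m)
    (hGc : ContinuousOn G (Icc 0 m)) (hG : StrictConcaveOn ℝ (Icc 0 m) G) (hG0 : 0 < G 0)
    (hGm : G m ≤ m / D) :
    ∃! c, c ∈ Ioc 0 m ∧ G c = c / D := by
  obtain ⟨c, hc, hGc⟩ := exists_mem_Ioc_eq_div_of_continuousOn hm hGc hG0 hGm
  have slope_eq {x : ℝ} (hx : x ∈ Ioc 0 m) (hGx : G x = x / D) : G x / x = D⁻¹ := by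
    rw [hGx, div_div_cancel_left' hx.1.ne']
  refine ⟨c, ⟨hc, hGc⟩, fun y ⟨hy, hGy⟩ => ?_⟩
  exact (hG.strictAntiOn_div_self hG0.le).injOn hy hc
    ((slope_eq hy hGy).trans (slope_eq hc hGc).symm)

theorem pa_unique_equilibrium_threshold_general
    (c_max P_L P_H B : ℝ) (F : ℝ → ℝ)
    (hcmax : 0 < c_max)
    (hFcont : ContinuousOn F (Icc 0 c_max))
    (hF0 : F 0 = 0) (hFmax : F c_max = 1)
    (hFconc : StrictConcaveOn ℝ (Icc 0 c_max) F)
    (hPL : 1 / 2 < P_L) (hPLH : P_L < P_H)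
    (hBpos : 0 < B)
    (hB : B ≤ c_max / ((2 * P_H - 1) * (P_H - P_L))) :
    ∃! c : ℝ, c ∈ Ioc 0 c_max ∧
      2 * (P_H - P_L) * F c + 2 * P_L - 1 = c / (B * (P_H - P_L)) := by
  have hgap : 0 < P_H - P_L := sub_pos.mpr hPLH
  have hBQ : B * ((2 * P_H - 1) * (P_H - P_L)) ≤ c_max :=
    (le_div_iff₀ (mul_pos (by linarith) hgap)).mp hB
  have hend : 2 * (P_H - P_L) * F c_max + (2 * P_L - 1) ≤ c_max / (B * (P_H - P_L)) := by
    rw [le_div_iff₀ (mul_pos hBpos hgap), hFmax]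
    linarith
  simpa only [add_sub_assoc] using
    existsUnique_mem_Ioc_eq_div_of_strictConcaveOn
      (G := fun c => 2 * (P_H - P_L) * F c + (2 * P_L - 1)) hcmax.le
      ((continuousOn_const.mul hFcont).add continuousOn_const)
      (hFconc.const_mul_add (by linarith) _) (by rw [hF0]; linarith) hend

/-- When `P_L > 1/2` and `B ≤ B_PA`, the PA equilibrium equation has a unique solution
`c* ∈ (0, c_max]`. -/
theorem pa_unique_equilibrium_threshold
    (c_max P_L P_H B : ℝ) (F : ℝ → ℝ)
    (hcmax : 0 < c_max)
    (hFcont : ContinuousOn F (Icc 0 c_max))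
    (hFmono : MonotoneOn F (Icc 0 c_max))
    (hF0 : F 0 = 0) (hFmax : F c_max = 1)
    (hFconc : StrictConcaveOn ℝ (Icc 0 c_max) F)
    (hPL : 1 / 2 < P_L) (hPLH : P_L < P_H) (hPH : P_H ≤ 1)
    (hBpos : 0 < B)
    (hB : B ≤ c_max / ((2 * P_H - 1) * (P_H - P_L))) :
    ∃! c : ℝ, c ∈ Ioc 0 c_max ∧
      2 * (P_H - P_L) * F c + 2 * P_L - 1 = c / (B * (P_H - P_L)) :=
  pa_unique_equilibrium_threshold_general c_max P_L P_H B F hcmax hFcont hF0 hFmax hFconc hPL hPLH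
    hBpos hB
end

section
/- Suppose P_L = 1/2, F is differentiable on [0, c_max] with density f = F' and f(0) > 0, and B < 1/(2·f(0)·(P_H − P_L)²). Then for every c ∈ (0, c_max], 2·(P_H − P_L)·F(c) < c/(B·(P_H − P_L)); consequently the PA equilibrium equation 2·(P_H − P_L)·F(c) = c/(B·(P_H − P_L)) has no solution c > 0, i.e. no effort exertion (c* = 0) is the only equilibrium threshold. -/
open Set

/-- When `P_L = 1/2`, if the bonus level is too small, namely
`B < 1/(2 f(0) (P_H - P_L)^2)`, then the PA equilibrium equation has no solution `c > 0`:
no effort exertion (`c* = 0`) is the only equilibrium threshold. -/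
theorem pa_no_effort_when_small_bonus
    (c_max P_L P_H B : ℝ) (F f : ℝ → ℝ)
    (hcmax : 0 < c_max)
    (hFcont : ContinuousOn F (Icc 0 c_max))
    (hFmono : MonotoneOn F (Icc 0 c_max))
    (hF0 : F 0 = 0) (hFmax : F c_max = 1)
    (hFconc : StrictConcaveOn ℝ (Icc 0 c_max) F)
    (hderiv : ∀ c ∈ Icc 0 c_max, HasDerivWithinAt F (f c) (Icc 0 c_max) c)
    (hf0 : 0 < f 0)
    (hPL : P_L = 1 / 2) (hPLH : P_L < P_H) (hPH : P_H ≤ 1)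
    (hBpos : 0 < B)
    (hB : B < 1 / (2 * f 0 * (P_H - P_L) ^ 2)) :
    ∀ c ∈ Ioc 0 c_max,
      2 * (P_H - P_L) * F c < c / (B * (P_H - P_L)) := by
  intro c hc
  obtain ⟨hc0, hcm⟩ := hc
  have ha : 0 < P_H - P_L := by linarith
  have h0mem : (0 : ℝ) ∈ Icc 0 c_max := ⟨le_rfl, hcmax.le⟩
  have hcmem : c ∈ Icc 0 c_max := ⟨hc0.le, hcm⟩
  have hslope := hFconc.slope_lt_of_hasDerivWithinAt h0mem hcmem hc0
    (hderiv 0 h0mem)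
  rw [slope_def_field, hF0] at hslope
  have hFc : F c < f 0 * c := by
    have := (div_lt_iff₀ hc0).mp (by simpa using hslope)
    linarith
  have hBa : 0 < B * (P_H - P_L) := mul_pos hBpos ha
  rw [lt_div_iff₀ hBa]
  have hB' : B * (2 * f 0 * (P_H - P_L) ^ 2) < 1 := by
    have h2 : 0 < 2 * f 0 * (P_H - P_L) ^ 2 := by positivity
    calc B * (2 * f 0 * (P_H - P_L) ^ 2)
        < (1 / (2 * f 0 * (P_H - P_L) ^ 2)) * (2 * f 0 * (P_H - P_L) ^ 2) := by
          exact mul_lt_mul_of_pos_right hB h2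
      _ = 1 := by field_simp
  nlinarith [mul_pos ha hc0, mul_pos (mul_pos ha ha) hBpos, mul_pos hf0 hc0]
end

section
/- Suppose P_L = 1/2 and B ≥ B_PA. Then for every c ∈ (0, c_max), 2·(P_H − P_L)·F(c) > c/(B·(P_H − P_L)); i.e., exerting effort is strictly preferred at every interior cost level, so the equilibrium threshold is c* = c_max. -/
open Set

/-- When `P_L = 1/2` and `B ≥ B_PA`, exerting effort is strictly preferred at every
interior cost level, so the equilibrium threshold is `c* = c_max`. -/
theorem pa_full_effort_when_large_bonus_half
    (c_max P_L P_H B : ℝ) (F : ℝ → ℝ)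
    (hcmax : 0 < c_max)
    (hFcont : ContinuousOn F (Icc 0 c_max))
    (hFmono : MonotoneOn F (Icc 0 c_max))
    (hF0 : F 0 = 0) (hFmax : F c_max = 1)
    (hFconc : StrictConcaveOn ℝ (Icc 0 c_max) F)
    (hPL : P_L = 1 / 2) (hPLH : P_L < P_H) (hPH : P_H ≤ 1)
    (hBpos : 0 < B)
    (hB : c_max / ((2 * P_H - 1) * (P_H - P_L)) ≤ B) :
    ∀ c ∈ Ioo 0 c_max,
      2 * (P_H - P_L) * F c > c / (B * (P_H - P_L)) := by
  intro c hc
  obtain ⟨hc0, hcc⟩ := hc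
  have ha : 0 < P_H - P_L := by linarith
  have h2 : 2 * P_H - 1 = 2 * (P_H - P_L) := by rw [hPL]; ring
  rw [h2] at hB
  have hden : 0 < 2 * (P_H - P_L) * (P_H - P_L) := by positivity
  have hBbig : c_max ≤ B * (2 * (P_H - P_L) * (P_H - P_L)) :=
    (div_le_iff₀ hden).mp hB
  -- strict concavity gives F c > c / c_max
  set t : ℝ := c / c_max with ht
  have ht0 : 0 < t := div_pos hc0 hcmax
  have ht1 : t < 1 := (div_lt_one hcmax).mpr hcc
  have hkey : t < F c := by
    have h0mem : (0 : ℝ) ∈ Icc 0 c_max := ⟨le_refl _, hcmax.le⟩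
    have hmmem : c_max ∈ Icc (0:ℝ) c_max := ⟨hcmax.le, le_refl _⟩
    have := hFconc.2 h0mem hmmem (by linarith : (0:ℝ) ≠ c_max)
      (by linarith : 0 < 1 - t) ht0 (by ring)
    have heq : (1 - t) • (0:ℝ) + t • c_max = c := by
      simp [smul_eq_mul, ht]
      field_simp
    rw [heq, hF0, hFmax] at this
    simpa using this
  have hFc : c < c_max * F c := by
    have := (div_lt_iff₀ hcmax).mp hkey
    linarith
  have hFpos : 0 < F c := by nlinarith
  rw [gt_iff_lt, div_lt_iff₀ (by positivity : 0 < B * (P_H - P_L))]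
  nlinarith [mul_le_mul_of_nonneg_right hBbig hFpos.le]
end

section
/- Suppose P_L = 1/2, B < B_PA, and there exists c₀ ∈ (0, c_max) with 2·(P_H − P_L)·F(c₀) ≥ c₀/(B·(P_H − P_L)). Then there is exactly one c* ∈ (0, c_max) satisfying 2·(P_H − P_L)·F(c*) = c*/(B·(P_H − P_L)), equivalently B = c*/(2·F(c*)·(P_H − P_L)²). -/
/-!
With `m = (2 B (P_H - P_L)²)⁻¹` the equilibrium equation reads `F c = m c`. The bound `B < B_PA`
says exactly that `F c_max = 1 < m c_max`, so the intermediate value theorem on `[c₀, c_max]`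
produces a solution. It is unique because `F` is strictly concave with `F 0 = 0`: the slope
`F c / c` of its chords from the origin is strictly decreasing, so it equals `m` at most once.
-/

open Set

theorem StrictConcaveOn.eq_of_apply_eq_mul_of_apply_eq_mul {s : Set ℝ} {f : ℝ → ℝ}
    (hf : StrictConcaveOn ℝ s f) (h0 : (0 : ℝ) ∈ s) (hf0 : f 0 = 0) {m x y : ℝ}
    (hx : x ∈ s) (hy : y ∈ s) (hx0 : 0 < x) (hy0 : 0 < y)
    (hfx : f x = m * x) (hfy : f y = m * y) : x = y := by
  have slope_eq {z : ℝ} (hz0 : 0 < z) (hfz : f z = m * z) : (f z - f 0) / (z - 0) = m := by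
    rw [hf0, hfz, sub_zero, sub_zero, mul_div_cancel_right₀ m hz0.ne']
  by_contra hxy
  rcases lt_or_gt_of_ne hxy with hlt | hlt
  · have := hf.secant_strict_mono h0 hx hy hx0.ne' hy0.ne' hlt
    rw [slope_eq hx0 hfx, slope_eq hy0 hfy] at this
    exact this.false
  · have := hf.secant_strict_mono h0 hy hx hy0.ne' hx0.ne' hlt
    rw [slope_eq hx0 hfx, slope_eq hy0 hfy] at this
    exact this.false

theorem exists_mem_Ico_apply_eq_mul {f : ℝ → ℝ} {a b m : ℝ} (hab : a ≤ b)
    (hf : ContinuousOn f (Icc a b)) (ha : m * a ≤ f a) (hb : f b < m * b) :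
    ∃ c ∈ Ico a b, f c = m * c := by
  have hg : ContinuousOn (fun x => f x - m * x) (Icc a b) :=
    hf.sub (continuous_const.mul continuous_id).continuousOn
  obtain ⟨c, hc, hgc⟩ :=
    intermediate_value_Ico' hab hg (show (0 : ℝ) ∈ _ from ⟨by linarith, by linarith⟩)
  exact ⟨c, hc, sub_eq_zero.mp hgc⟩

theorem pa_unique_interior_equilibrium_half_general
    (c_max P_L P_H B : ℝ) (F : ℝ → ℝ)
    (hFcont : ContinuousOn F (Icc 0 c_max))
    (hF0 : F 0 = 0) (hFmax : F c_max = 1)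
    (hFconc : StrictConcaveOn ℝ (Icc 0 c_max) F)
    (hPL : P_L = 1 / 2) (hPLH : P_L < P_H)
    (hBpos : 0 < B)
    (hB : B < c_max / ((2 * P_H - 1) * (P_H - P_L)))
    (hexists : ∃ c₀ ∈ Ioo 0 c_max,
      2 * (P_H - P_L) * F c₀ ≥ c₀ / (B * (P_H - P_L))) :
    ∃! c : ℝ, c ∈ Ioo 0 c_max ∧
      2 * (P_H - P_L) * F c = c / (B * (P_H - P_L)) := by
  set p := P_H - P_L with hp_def
  have hp : 0 < p := sub_pos.mpr hPLH
  set m := (2 * B * p ^ 2)⁻¹ with hm_def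
  have equation_iff (c : ℝ) : 2 * p * F c = c / (B * p) ↔ F c = m * c := by
    rw [hm_def]
    constructor <;> intro h <;> field_simp at h ⊢ <;> linarith
  have hmcmax : F c_max < m * c_max := by
    rw [show 2 * P_H - 1 = 2 * p by rw [hp_def, hPL]; ring, lt_div_iff₀ (by positivity)] at hB
    rw [hFmax, ← div_eq_inv_mul, one_lt_div (by positivity)]
    linarith
  obtain ⟨c₀, ⟨hc₀, hc₀max⟩, hFc₀⟩ := hexists
  have hmc₀ : m * c₀ ≤ F c₀ := by
    rw [hm_def]
    field_simp at hFc₀ ⊢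
    linarith
  have hIcc : Icc c₀ c_max ⊆ Icc 0 c_max := Icc_subset_Icc_left hc₀.le
  obtain ⟨c, ⟨hc₀c, hcmax⟩, hFc⟩ :=
    exists_mem_Ico_apply_eq_mul hc₀max.le (hFcont.mono hIcc) hmc₀ hmcmax
  have hc : 0 < c := hc₀.trans_le hc₀c
  refine ⟨c, ⟨⟨hc, hcmax⟩, (equation_iff c).mpr hFc⟩, fun y ⟨⟨hy, hymax⟩, hFy⟩ => ?_⟩
  exact hFconc.eq_of_apply_eq_mul_of_apply_eq_mul (left_mem_Icc.mpr (hc.trans hcmax).le) hF0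
    ⟨hy.le, hymax.le⟩ ⟨hc.le, hcmax.le⟩ hy hc ((equation_iff y).mp hFy) hFc

/-- When `P_L = 1/2`, `B < B_PA` and the LHS of the PA equilibrium equation reaches the RHS
somewhere in `(0, c_max)`, then there is exactly one `c* ∈ (0, c_max)` solving
the PA equilibrium equation. -/
theorem pa_unique_interior_equilibrium_half
    (c_max P_L P_H B : ℝ) (F : ℝ → ℝ)
    (hcmax : 0 < c_max)
    (hFcont : ContinuousOn F (Icc 0 c_max))
    (hFmono : MonotoneOn F (Icc 0 c_max))
    (hF0 : F 0 = 0) (hFmax : F c_max = 1)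
    (hFconc : StrictConcaveOn ℝ (Icc 0 c_max) F)
    (hPL : P_L = 1 / 2) (hPLH : P_L < P_H) (hPH : P_H ≤ 1)
    (hBpos : 0 < B)
    (hB : B < c_max / ((2 * P_H - 1) * (P_H - P_L)))
    (hexists : ∃ c₀ ∈ Ioo 0 c_max,
      2 * (P_H - P_L) * F c₀ ≥ c₀ / (B * (P_H - P_L))) :
    ∃! c : ℝ, c ∈ Ioo 0 c_max ∧
      2 * (P_H - P_L) * F c = c / (B * (P_H - P_L)) :=
  pa_unique_interior_equilibrium_half_general c_max P_L P_H B F hFcont hF0 hFmax hFconc hPL hPLH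
    hBpos hB hexists
end

section
/- Let α ∈ (0,1) and let N ≥ 2 be an integer. Then the function c ↦ 1 − 2·((α − 1)·F(c) + 1)^(N−1) is strictly concave on [0, c_max]. -/
open Set

/-- Composition of a convex, strictly monotone function on `Ici 0` with a
strictly convex nonnegative function is strictly convex. -/
lemma strictConvexOn_comp_aux {s : Set ℝ} {f g : ℝ → ℝ}
    (hf : StrictConvexOn ℝ s f) (hg : ConvexOn ℝ (Ici 0) g)
    (hg' : StrictMonoOn g (Ici 0)) (hfs : ∀ x ∈ s, 0 ≤ f x) :
    StrictConvexOn ℝ s (fun x => g (f x)) := by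
  refine ⟨hf.1, fun x hx y hy hxy a b ha hb hab => ?_⟩
  have hmem : a • x + b • y ∈ s := hf.1 hx hy ha.le hb.le hab
  have h1 : f (a • x + b • y) < a * f x + b * f y := hf.2 hx hy hxy ha hb hab
  have h0 : (0:ℝ) ≤ f (a • x + b • y) := hfs _ hmem
  have h0' : (0:ℝ) ≤ a * f x + b * f y := by
    have := hfs x hx; have := hfs y hy; positivity
  calc g (f (a • x + b • y)) < g (a * f x + b * f y) := hg' h0 h0' h1
    _ ≤ a * g (f x) + b * g (f y) := by
        simpa using hg.2 (hfs x hx) (hfs y hy) ha.le hb.le hab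

/-- The LHS of the GA equilibrium equation, `c ↦ 1 - 2((α - 1) F(c) + 1)^(N-1)`,
is strictly concave on `[0, c_max]` for `α ∈ (0,1)` and integer `N ≥ 2`. -/
theorem ga_lhs_strictConcave
    (c_max α : ℝ) (N : ℕ) (F : ℝ → ℝ)
    (hcmax : 0 < c_max)
    (hα0 : 0 < α) (hα1 : α < 1) (hN : 2 ≤ N)
    (hFcont : ContinuousOn F (Icc 0 c_max))
    (hFmono : MonotoneOn F (Icc 0 c_max))
    (hF0 : F 0 = 0) (hFmax : F c_max = 1)
    (hFconc : StrictConcaveOn ℝ (Icc 0 c_max) F) :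
    StrictConcaveOn ℝ (Icc 0 c_max)
      (fun c => 1 - 2 * ((α - 1) * F c + 1) ^ (N - 1)) := by
  -- F c ≤ 1 on the interval
  have hFle : ∀ c ∈ Icc (0:ℝ) c_max, F c ≤ 1 := by
    intro c hc
    have := hFmono hc (right_mem_Icc.2 hcmax.le) hc.2
    linarith [hFmax ▸ this]
  -- inner function strictly convex
  have hinner : StrictConvexOn ℝ (Icc 0 c_max) (fun c => (α - 1) * F c + 1) := by
    refine ⟨hFconc.1, fun x hx y hy hxy a b ha hb hab => ?_⟩
    have h1 : a * F x + b * F y < F (a • x + b • y) := hFconc.2 hx hy hxy ha hb hab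
    have hα : α - 1 < 0 := by linarith
    simp only [smul_eq_mul] at h1 ⊢
    nlinarith [mul_lt_mul_of_neg_left h1 hα]
  -- inner function nonnegative
  have hpos : ∀ c ∈ Icc (0:ℝ) c_max, (0:ℝ) ≤ (α - 1) * F c + 1 := by
    intro c hc
    have := hFle c hc
    nlinarith
  -- the power composition is strictly convex
  have hpow : StrictConvexOn ℝ (Icc 0 c_max)
      (fun c => ((α - 1) * F c + 1) ^ (N - 1)) := by
    refine strictConvexOn_comp_aux hinner (convexOn_pow (N - 1)) ?_ hpos
    intro x hx y hy hxy
    have hn : N - 1 ≠ 0 := by omega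
    exact pow_lt_pow_left₀ hxy hx hn
  -- conclude
  refine ⟨hpow.1, fun x hx y hy hxy a b ha hb hab => ?_⟩
  have h1 := hpow.2 hx hy hxy ha hb hab
  simp only [smul_eq_mul] at h1 ⊢
  nlinarith
end

section
/- Let α ∈ (0,1), let N ≥ 2 be an integer with 1 − 2·α^(N−1) > 0, and suppose B·(P_H − P_L)·(1 − 2·α^(N−1)) > c_max (i.e. B > B_GA). Then there exists exactly one c* ∈ (0, c_max) satisfying the GA equilibrium equation 1 − 2·((α − 1)·F(c*) + 1)^(N−1) = c*/(B·(P_H − P_L)). -/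
/-!
Writing `D = B (P_H - P_L)`, the equilibria are the zeros in `(0, c_max)` of
`g c = h (F c) - c / D` with `h x = 1 - 2 ((α - 1) x + 1) ^ (N - 1)`. On `x ≤ 1` the map `h` is
concave (a power of a nonnegative affine function, negated) and strictly increasing, so `h ∘ F`
and hence `g` are strictly concave. Since `g 0 = -1` and `g c_max = 1 - 2 α ^ (N - 1) - c_max / D > 0`
by `B > B_GA`, a zero exists by the intermediate value theorem; two zeros `x < y < c_max` would
contradict strict concavity on the segment `[x, c_max]`, where `g` is `≥ 0` at both ends.
-/

open Set

theorem StrictConcaveOn.eq_of_apply_eq_of_le_apply {s : Set ℝ} {g : ℝ → ℝ}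
    (hg : StrictConcaveOn ℝ s g) {m x y r : ℝ} (hm : m ∈ s) (hrm : r ≤ g m)
    (hx : x ∈ s) (hy : y ∈ s) (hxm : x < m) (hym : y < m) (hgx : g x = r) (hgy : g y = r) :
    x = y := by
  have key : ∀ {u v}, u ∈ s → u < v → v < m → g u = r → g v = r → False :=
    fun hu huv hvm hgu hgv => by
      have := hg.lt_on_openSegment hu hm (huv.trans hvm).ne
        (by rw [openSegment_eq_Ioo (huv.trans hvm)]; exact ⟨huv, hvm⟩)
      rw [hgu, hgv, min_eq_left hrm] at this
      exact this.false
  rcases lt_trichotomy x y with h | h | h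
  · exact (key hx h hym hgx hgy).elim
  · exact h
  · exact (key hy h hxm hgy hgx).elim

theorem StrictConcaveOn.existsUnique_mem_Ioo_eq_zero {g : ℝ → ℝ} {a b : ℝ} (hab : a ≤ b)
    (hcont : ContinuousOn g (Icc a b)) (hconc : StrictConcaveOn ℝ (Icc a b) g)
    (ha : g a < 0) (hb : 0 < g b) : ∃! c, c ∈ Ioo a b ∧ g c = 0 := by
  obtain ⟨c, hc, hgc⟩ := intermediate_value_Ioo hab hcont ⟨ha, hb⟩
  refine ⟨c, ⟨hc, hgc⟩, fun y ⟨hy, hgy⟩ => ?_⟩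
  exact hconc.eq_of_apply_eq_of_le_apply (right_mem_Icc.2 hab) hb.le (Ioo_subset_Icc_self hy)
    (Ioo_subset_Icc_self hc) hy.2 hc.2 hgy hgc

-- The left-hand side of the GA equilibrium equation, as a function of `x = F c`.
def gaBenefit (α : ℝ) (n : ℕ) (x : ℝ) : ℝ := 1 - 2 * ((α - 1) * x + 1) ^ n

section gaBenefit

variable {α : ℝ} {n : ℕ}

theorem gaBenefit_one : gaBenefit α n 1 = 1 - 2 * α ^ n := by
  simp [gaBenefit]

theorem le_sub_one_mul_add_one (hα : α ≤ 1) {x : ℝ} (hx : x ≤ 1) : α ≤ (α - 1) * x + 1 := by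
  nlinarith

theorem concaveOn_gaBenefit (hα0 : 0 ≤ α) (hα1 : α ≤ 1) :
    ConcaveOn ℝ (Iic 1) (gaBenefit α n) := by
  refine ⟨convex_Iic 1, fun x hx y hy a b ha hb hab => ?_⟩
  have hbase : (α - 1) * (a * x + b * y) + 1 =
      a * ((α - 1) * x + 1) + b * ((α - 1) * y + 1) := by
    linear_combination (-1 : ℝ) * hab
  have hpow := (convexOn_pow n).2 (hα0.trans (le_sub_one_mul_add_one hα1 hx))
    (hα0.trans (le_sub_one_mul_add_one hα1 hy)) ha hb hab
  simp only [gaBenefit, smul_eq_mul, hbase] at hpow ⊢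
  linear_combination (2 : ℝ) * hpow + (1 : ℝ) * hab

theorem strictMonoOn_gaBenefit (hα0 : 0 ≤ α) (hα1 : α < 1) (hn : n ≠ 0) :
    StrictMonoOn (gaBenefit α n) (Iic 1) := by
  intro x _ y hy hxy
  have hbase : (α - 1) * y + 1 < (α - 1) * x + 1 := by nlinarith
  have := pow_lt_pow_left₀ hbase (hα0.trans (le_sub_one_mul_add_one hα1.le hy)) hn
  simp only [gaBenefit]
  linarith

end gaBenefit

theorem ga_unique_equilibrium_threshold_general
    (c_max P_L P_H B α : ℝ) (N : ℕ) (F : ℝ → ℝ)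
    (hcmax : 0 < c_max)
    (hα0 : 0 < α) (hα1 : α < 1) (hN : 2 ≤ N)
    (hFcont : ContinuousOn F (Icc 0 c_max))
    (hFmono : MonotoneOn F (Icc 0 c_max))
    (hF0 : F 0 = 0) (hFmax : F c_max = 1)
    (hFconc : StrictConcaveOn ℝ (Icc 0 c_max) F)
    (hPLH : P_L < P_H)
    (hBpos : 0 < B)
    (hB : B * (P_H - P_L) * (1 - 2 * α ^ (N - 1)) > c_max) :
    ∃! c : ℝ, c ∈ Ioo 0 c_max ∧
      1 - 2 * ((α - 1) * F c + 1) ^ (N - 1) = c / (B * (P_H - P_L)) := by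
  set D := B * (P_H - P_L)
  have hD : 0 < D := mul_pos hBpos (sub_pos.2 hPLH)
  have hFle : F '' Icc 0 c_max ⊆ Iic 1 := image_subset_iff.2 fun c hc =>
    hFmax ▸ hFmono hc (right_mem_Icc.2 hcmax.le) hc.2
  have hbenefit : StrictConcaveOn ℝ (Icc 0 c_max) (gaBenefit α (N - 1) ∘ F) :=
    ((concaveOn_gaBenefit hα0.le hα1.le).subset hFle
      (isPreconnected_Icc.image F hFcont).ordConnected.convex).comp_strictConcaveOn hFconc
      ((strictMonoOn_gaBenefit hα0.le hα1 (by omega)).mono hFle)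
  have hcost : ConvexOn ℝ (Icc 0 c_max) fun c => c / D := by
    simpa only [smul_eq_mul, id, div_eq_inv_mul] using
      (convexOn_id (convex_Icc 0 c_max)).smul (inv_nonneg.2 hD.le)
  have hcont : ContinuousOn (fun c => gaBenefit α (N - 1) (F c) - c / D) (Icc 0 c_max) := by
    unfold gaBenefit; fun_prop
  have hpos : 0 < gaBenefit α (N - 1) (F c_max) - c_max / D := by
    rw [hFmax, gaBenefit_one, sub_pos, div_lt_iff₀ hD]
    linarith
  simpa only [gaBenefit, sub_eq_zero] using
    (hbenefit.sub_convexOn hcost).existsUnique_mem_Ioo_eq_zero hcmax.le hcont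
      (by norm_num [gaBenefit, hF0]) hpos

/-- When `B > B_GA` (i.e. `B (P_H - P_L)(1 - 2 α^(N-1)) > c_max`), the GA equilibrium
equation has a unique solution `c* ∈ (0, c_max)`. -/
theorem ga_unique_equilibrium_threshold
    (c_max P_L P_H B α : ℝ) (N : ℕ) (F : ℝ → ℝ)
    (hcmax : 0 < c_max)
    (hα0 : 0 < α) (hα1 : α < 1) (hN : 2 ≤ N)
    (hαN : 0 < 1 - 2 * α ^ (N - 1))
    (hFcont : ContinuousOn F (Icc 0 c_max))
    (hFmono : MonotoneOn F (Icc 0 c_max))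
    (hF0 : F 0 = 0) (hFmax : F c_max = 1)
    (hFconc : StrictConcaveOn ℝ (Icc 0 c_max) F)
    (hPL : 1 / 2 ≤ P_L) (hPLH : P_L < P_H) (hPH : P_H ≤ 1)
    (hBpos : 0 < B)
    (hB : B * (P_H - P_L) * (1 - 2 * α ^ (N - 1)) > c_max) :
    ∃! c : ℝ, c ∈ Ioo 0 c_max ∧
      1 - 2 * ((α - 1) * F c + 1) ^ (N - 1) = c / (B * (P_H - P_L)) :=
  ga_unique_equilibrium_threshold_general c_max P_L P_H B α N F hcmax hα0 hα1 hN hFcont hFmono hF0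
    hFmax hFconc hPLH hBpos hB
end

section
/- Suppose 1/2 < P_L < P_H ≤ 1, and F is nondecreasing, concave and differentiable on [0, c_max] with F(0) = 0. Then the function g(c) := c/(2·(P_H − P_L)·F(c) + 2·P_L − 1) is strictly increasing on [0, c_max]. (Hence a larger equilibrium effort-exertion threshold corresponds to a higher bonus level, and g has a well-defined inverse.) -/
open Set

/-- The map `g(c) = c / (2 (P_H - P_L) F(c) + 2 P_L - 1)` from equilibrium effort
threshold to (normalized) bonus level in the PA mechanism is strictly increasing
on `[0, c_max]`. -/
theorem pa_bonus_map_strictMono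
    (c_max P_L P_H : ℝ) (F : ℝ → ℝ)
    (hcmax : 0 < c_max)
    (hPL : 1 / 2 < P_L) (hPLH : P_L < P_H) (hPH : P_H ≤ 1)
    (hFmono : MonotoneOn F (Icc 0 c_max))
    (hFconc : ConcaveOn ℝ (Icc 0 c_max) F)
    (hFdiff : DifferentiableOn ℝ F (Icc 0 c_max))
    (hF0 : F 0 = 0) :
    StrictMonoOn (fun c => c / (2 * (P_H - P_L) * F c + 2 * P_L - 1))
      (Icc 0 c_max) := by
  intro x hx y hy hxy
  have h0mem : (0 : ℝ) ∈ Icc 0 c_max := ⟨le_refl 0, hcmax.le⟩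
  have ha : 0 < 2 * (P_H - P_L) := by linarith
  have hb : 0 < 2 * P_L - 1 := by linarith
  have hFx : 0 ≤ F x := by
    have := hFmono h0mem hx hx.1
    rwa [hF0] at this
  have hFy : 0 ≤ F y := by
    have := hFmono h0mem hy hy.1
    rwa [hF0] at this
  have hDx : 0 < 2 * (P_H - P_L) * F x + 2 * P_L - 1 := by nlinarith
  have hDy : 0 < 2 * (P_H - P_L) * F y + 2 * P_L - 1 := by nlinarith
  -- key inequality: x * F y ≤ y * F x
  have hkey : x * F y ≤ y * F x := by
    rcases eq_or_lt_of_le hx.1 with h0x | h0x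
    · simp [← h0x, hF0]
    · have hy0 : 0 < y := lt_trans h0x hxy
      have ht0 : 0 ≤ x / y := by positivity
      have ht1 : x / y ≤ 1 := by
        rw [div_le_one hy0]; exact hxy.le
      have := hFconc.2 h0mem hy (sub_nonneg.mpr ht1) ht0 (by ring)
      simp only [smul_eq_mul, mul_zero, zero_add] at this
      rw [div_mul_cancel₀ _ hy0.ne', hF0, mul_zero, zero_add] at this
      have h2 : x / y * F y ≤ F x := this
      calc x * F y = y * (x / y * F y) := by field_simp
        _ ≤ y * F x := by nlinarith
  rw [div_lt_div_iff₀ hDx hDy]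
  nlinarith [mul_le_mul_of_nonneg_left hkey ha.le]
end

section
/- Let G : [0, c_max] → ℝ be three times differentiable with G(0) = 0 and, for all c ∈ [0, c_max], G'(c) ≥ 0, G''(c) ≤ 0 and G'''(c) ≤ 0. Then the function c ↦ G(c)/c is concave on (0, c_max]. If moreover G(c) > 0 for all c ∈ (0, c_max], then the function c ↦ c/G(c) is convex on (0, c_max]. -/
open Set

/-! With `φ(c) = c² G''(c) - 2c G'(c) + 2G(c)` one has `(G(c)/c)'' = φ(c)/c³` and
`φ'(c) = c² G'''(c) ≤ 0`, so `φ` decreases from `φ(0) = 2G(0) = 0` and is nonpositive: this is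
the concavity of `G(c)/c`. Its reciprocal `c/G(c)` is then convex, since `t ↦ t⁻¹` is convex and
antitone on `(0, ∞)`. -/

theorem ConcaveOn.convexOn_inv {𝕜 E : Type*} [Field 𝕜] [LinearOrder 𝕜] [IsStrictOrderedRing 𝕜]
    [AddCommMonoid E] [Module 𝕜 E] {s : Set E} {f : E → 𝕜} (hf : ConcaveOn 𝕜 s f)
    (hf₀ : ∀ x ∈ s, 0 < f x) : ConvexOn 𝕜 s fun x => (f x)⁻¹ := by
  refine ⟨hf.1, fun x hx y hy a b ha hb hab => ?_⟩
  have hinv : ConvexOn 𝕜 (Ioi 0) fun t : 𝕜 => t⁻¹ := by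
    simpa only [zpow_neg, zpow_one] using convexOn_zpow (𝕜 := 𝕜) (-1)
  have hcomb : 0 < a • f x + b • f y := convex_Ioi 0 (hf₀ x hx) (hf₀ y hy) ha hb hab
  calc (f (a • x + b • y))⁻¹ ≤ (a • f x + b • f y)⁻¹ := inv_anti₀ hcomb (hf.2 hx hy ha hb hab)
    _ ≤ a • (f x)⁻¹ + b • (f y)⁻¹ := hinv.2 (hf₀ x hx) (hf₀ y hy) ha hb hab

theorem hasDerivAt_of_hasDerivWithinAt_Icc {f f' : ℝ → ℝ} {a b x : ℝ}
    (hf : ∀ c ∈ Icc a b, HasDerivWithinAt f (f' c) (Icc a b) c) (hx : x ∈ Ioo a b) :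
    HasDerivAt f (f' x) x :=
  (hf x (Ioo_subset_Icc_self hx)).hasDerivAt (Icc_mem_nhds hx.1 hx.2)

section DivId

variable {G G' G'' G''' : ℝ → ℝ} {x b : ℝ}

/-- `c³` times the second derivative of `c ↦ G c / c`. -/
def divIdSecondDerivNumerator (G G' G'' : ℝ → ℝ) (c : ℝ) : ℝ :=
  c ^ 2 * G'' c - 2 * c * G' c + 2 * G c

theorem hasDerivAt_div_id (hG : HasDerivAt G (G' x) x) (hx : x ≠ 0) :
    HasDerivAt (fun c => G c / c) ((G' x * x - G x) / x ^ 2) x := by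
  simpa only [mul_one] using hG.fun_div (hasDerivAt_id' x) hx

theorem hasDerivAt_deriv_div_id (hG : HasDerivAt G (G' x) x) (hG' : HasDerivAt G' (G'' x) x)
    (hx : x ≠ 0) :
    HasDerivAt (fun c => (G' c * c - G c) / c ^ 2)
      (divIdSecondDerivNumerator G G' G'' x / x ^ 3) x := by
  have hnum : HasDerivAt (fun c => G' c * c - G c) (G'' x * x) x :=
    ((hG'.fun_mul (hasDerivAt_id' x)).fun_sub hG).congr_deriv (by ring)
  refine (hnum.fun_div (hasDerivAt_pow 2 x) (pow_ne_zero 2 hx)).congr_deriv ?_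
  simp only [divIdSecondDerivNumerator]
  field_simp
  ring

theorem hasDerivAt_divIdSecondDerivNumerator (hG : HasDerivAt G (G' x) x)
    (hG' : HasDerivAt G' (G'' x) x) (hG'' : HasDerivAt G'' (G''' x) x) :
    HasDerivAt (divIdSecondDerivNumerator G G' G'') (x ^ 2 * G''' x) x := by
  refine ((((hasDerivAt_pow 2 x).fun_mul hG'').fun_sub
    (((hasDerivAt_id' x).const_mul 2).fun_mul hG')).fun_add (hG.const_mul 2)).congr_deriv ?_
  ring

theorem divIdSecondDerivNumerator_nonpos (hG0 : G 0 = 0)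
    (hd1 : ∀ c ∈ Icc 0 b, HasDerivWithinAt G (G' c) (Icc 0 b) c)
    (hd2 : ∀ c ∈ Icc 0 b, HasDerivWithinAt G' (G'' c) (Icc 0 b) c)
    (hd3 : ∀ c ∈ Icc 0 b, HasDerivWithinAt G'' (G''' c) (Icc 0 b) c)
    (hG''' : ∀ c ∈ Ioo 0 b, G''' c ≤ 0) {c : ℝ} (hc : c ∈ Icc 0 b) :
    divIdSecondDerivNumerator G G' G'' c ≤ 0 := by
  have hderiv : ∀ y ∈ Ioo 0 b,
      HasDerivAt (divIdSecondDerivNumerator G G' G'') (y ^ 2 * G''' y) y := fun y hy =>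
    hasDerivAt_divIdSecondDerivNumerator (hasDerivAt_of_hasDerivWithinAt_Icc hd1 hy)
      (hasDerivAt_of_hasDerivWithinAt_Icc hd2 hy) (hasDerivAt_of_hasDerivWithinAt_Icc hd3 hy)
  have hcont : ContinuousOn (divIdSecondDerivNumerator G G' G'') (Icc 0 b) :=
    ((continuousOn_pow 2).mul fun y hy => (hd3 y hy).continuousWithinAt).sub
      ((continuousOn_const.mul continuousOn_id).mul fun y hy => (hd2 y hy).continuousWithinAt)
    |>.add (continuousOn_const.mul fun y hy => (hd1 y hy).continuousWithinAt)
  have hanti : AntitoneOn (divIdSecondDerivNumerator G G' G'') (Icc 0 b) := by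
    refine antitoneOn_of_deriv_nonpos (convex_Icc 0 b) hcont ?_ ?_ <;> rw [interior_Icc]
    · exact fun y hy => (hderiv y hy).differentiableAt.differentiableWithinAt
    · intro y hy
      rw [(hderiv y hy).deriv]
      exact mul_nonpos_of_nonneg_of_nonpos (sq_nonneg y) (hG''' y hy)
  have h0 : divIdSecondDerivNumerator G G' G'' 0 = 0 := by
    simp [divIdSecondDerivNumerator, hG0]
  simpa only [h0] using hanti ⟨le_rfl, hc.1.trans hc.2⟩ hc hc.1

theorem concaveOn_div_id
    (hd1 : ∀ c ∈ Icc 0 b, HasDerivWithinAt G (G' c) (Icc 0 b) c)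
    (hd2 : ∀ c ∈ Icc 0 b, HasDerivWithinAt G' (G'' c) (Icc 0 b) c)
    (hnum : ∀ c ∈ Ioo 0 b, divIdSecondDerivNumerator G G' G'' c ≤ 0) :
    ConcaveOn ℝ (Ioc 0 b) fun c => G c / c := by
  have hG : ContinuousOn G (Ioc 0 b) :=
    ContinuousOn.mono (fun y hy => (hd1 y hy).continuousWithinAt) Ioc_subset_Icc_self
  refine concaveOn_of_hasDerivWithinAt2_nonpos (convex_Ioc 0 b)
    (hG.div continuousOn_id fun y hy => hy.1.ne')
    (f' := fun c => (G' c * c - G c) / c ^ 2)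
    (f'' := fun c => divIdSecondDerivNumerator G G' G'' c / c ^ 3) ?_ ?_ ?_ <;> rw [interior_Ioc]
  · exact fun y hy => (hasDerivAt_div_id (hasDerivAt_of_hasDerivWithinAt_Icc hd1 hy)
      hy.1.ne').hasDerivWithinAt
  · exact fun y hy => (hasDerivAt_deriv_div_id (hasDerivAt_of_hasDerivWithinAt_Icc hd1 hy)
      (hasDerivAt_of_hasDerivWithinAt_Icc hd2 hy) hy.1.ne').hasDerivWithinAt
  · exact fun y hy => div_nonpos_of_nonpos_of_nonneg (hnum y hy) (pow_pos hy.1 3).le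

end DivId

theorem ratio_concave_and_inv_convex_general
    (c_max : ℝ) (G G' G'' G''' : ℝ → ℝ)
    (hG0 : G 0 = 0)
    (hd1 : ∀ c ∈ Icc 0 c_max, HasDerivWithinAt G (G' c) (Icc 0 c_max) c)
    (hd2 : ∀ c ∈ Icc 0 c_max, HasDerivWithinAt G' (G'' c) (Icc 0 c_max) c)
    (hd3 : ∀ c ∈ Icc 0 c_max, HasDerivWithinAt G'' (G''' c) (Icc 0 c_max) c)
    (hG'''nonpos : ∀ c ∈ Icc 0 c_max, G''' c ≤ 0) :
    ConcaveOn ℝ (Ioc 0 c_max) (fun c => G c / c) ∧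
    ((∀ c ∈ Ioc 0 c_max, 0 < G c) →
      ConvexOn ℝ (Ioc 0 c_max) (fun c => c / G c)) := by
  have hconc : ConcaveOn ℝ (Ioc 0 c_max) fun c => G c / c :=
    concaveOn_div_id hd1 hd2 fun c hc =>
      divIdSecondDerivNumerator_nonpos hG0 hd1 hd2 hd3
        (fun y hy => hG'''nonpos y (Ioo_subset_Icc_self hy)) (Ioo_subset_Icc_self hc)
  refine ⟨hconc, fun hGpos => ?_⟩
  simpa only [inv_div] using hconc.convexOn_inv fun c hc => div_pos (hGpos c hc) hc.1

/-- If `G(0) = 0`, `G' ≥ 0`, `G'' ≤ 0` and `G''' ≤ 0` on `[0, c_max]`, then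
`c ↦ G(c)/c` is concave on `(0, c_max]`; if moreover `G > 0` on `(0, c_max]`, then
`c ↦ c/G(c)` is convex on `(0, c_max]`. -/
theorem ratio_concave_and_inv_convex
    (c_max : ℝ) (G G' G'' G''' : ℝ → ℝ)
    (hcmax : 0 < c_max)
    (hG0 : G 0 = 0)
    (hd1 : ∀ c ∈ Icc 0 c_max, HasDerivWithinAt G (G' c) (Icc 0 c_max) c)
    (hd2 : ∀ c ∈ Icc 0 c_max, HasDerivWithinAt G' (G'' c) (Icc 0 c_max) c)
    (hd3 : ∀ c ∈ Icc 0 c_max, HasDerivWithinAt G'' (G''' c) (Icc 0 c_max) c)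
    (hG'nonneg : ∀ c ∈ Icc 0 c_max, 0 ≤ G' c)
    (hG''nonpos : ∀ c ∈ Icc 0 c_max, G'' c ≤ 0)
    (hG'''nonpos : ∀ c ∈ Icc 0 c_max, G''' c ≤ 0) :
    ConcaveOn ℝ (Ioc 0 c_max) (fun c => G c / c) ∧
    ((∀ c ∈ Ioc 0 c_max, 0 < G c) →
      ConvexOn ℝ (Ioc 0 c_max) (fun c => c / G c)) :=
  ratio_concave_and_inv_convex_general c_max G G' G'' G''' hG0 hd1 hd2 hd3 hG'''nonpos
end

section
/- Let 1/2 < P_L < P_H < 1, set α := exp(−2·(P_H − P_L)²), and fix y ∈ (0, 1]. Then there exists an integer N₀ such that for every integer N ≥ N₀: 1 − 2·((α − 1)·y + 1)^(N−1) > 2·(P_H − P_L)·y + 2·P_L − 1. Consequently, for every c > 0, the GA bonus level c/((P_H − P_L)·(1 − 2·((α − 1)·y + 1)^(N−1))) is strictly smaller than the PA bonus level c/((P_H − P_L)·(2·(P_H − P_L)·y + 2·P_L − 1)). -/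
open Set

/-- For sufficiently many workers per task, the GA mechanism requires a strictly smaller
bonus level than the PA mechanism to induce the same effort threshold. -/
theorem ga_cheaper_than_pa
    (P_L P_H y : ℝ)
    (h1 : 1 / 2 < P_L) (h2 : P_L < P_H) (h3 : P_H < 1)
    (hy : y ∈ Ioc (0 : ℝ) 1) :
    ∃ N₀ : ℕ, ∀ N : ℕ, N₀ ≤ N →
      (1 - 2 * ((Real.exp (-2 * (P_H - P_L) ^ 2) - 1) * y + 1) ^ (N - 1)
          > 2 * (P_H - P_L) * y + 2 * P_L - 1) ∧
      ∀ c : ℝ, 0 < c →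
        c / ((P_H - P_L) *
            (1 - 2 * ((Real.exp (-2 * (P_H - P_L) ^ 2) - 1) * y + 1) ^ (N - 1)))
          < c / ((P_H - P_L) * (2 * (P_H - P_L) * y + 2 * P_L - 1)) := by
  obtain ⟨hy0, hy1⟩ := hy
  set α := Real.exp (-2 * (P_H - P_L) ^ 2) with hα
  set β := (α - 1) * y + 1 with hβ
  have hΔ : 0 < P_H - P_L := by linarith
  have hα0 : 0 < α := Real.exp_pos _
  have hα1 : α < 1 := by
    rw [hα]
    have : (-2 : ℝ) * (P_H - P_L) ^ 2 < 0 := by nlinarith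
    calc Real.exp (-2 * (P_H - P_L) ^ 2) < Real.exp 0 := Real.exp_lt_exp.2 this
      _ = 1 := Real.exp_zero
  have hβ0 : 0 < β := by
    have : (α - 1) * y ≥ (α - 1) * 1 := by nlinarith
    nlinarith
  have hβ1 : β < 1 := by nlinarith
  -- PA threshold r < 1 and r > 0
  set r := 2 * (P_H - P_L) * y + 2 * P_L - 1 with hr
  have hr0 : 0 < r := by nlinarith
  have hr1 : r < 1 := by nlinarith
  have htend : Filter.Tendsto (fun n : ℕ => β ^ n) Filter.atTop (nhds 0) :=
    tendsto_pow_atTop_nhds_zero_of_lt_one hβ0.le hβ1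
  have hev : ∀ᶠ n : ℕ in Filter.atTop, β ^ n < (1 - r) / 2 := by
    have := htend.eventually (eventually_lt_nhds (by linarith : (0:ℝ) < (1 - r) / 2))
    exact this
  obtain ⟨N₀, hN₀⟩ := Filter.eventually_atTop.1 hev
  refine ⟨N₀ + 1, fun N hN => ?_⟩
  have hN1 : N₀ ≤ N - 1 := by omega
  have hpow := hN₀ _ hN1
  have hgt : 1 - 2 * β ^ (N - 1) > r := by linarith
  refine ⟨hgt, fun c hc => ?_⟩
  have hdPA : 0 < (P_H - P_L) * r := mul_pos hΔ hr0
  have hlt : (P_H - P_L) * r < (P_H - P_L) * (1 - 2 * β ^ (N - 1)) := by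
    exact mul_lt_mul_of_pos_left hgt hΔ
  exact div_lt_div_of_pos_left hc hdPA hlt
end
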